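/- arXiv:2209.03775 — 2 statements merged into one kernel-verified Lean document; each statement's English description precedes it below -/
import Mathlib

section
/- For all real numbers x ∈ [0,1], u ∈ (0,1) and z ∈ [0,1), the double series ∑_{p≥1} ∑_{n≥0} Q_{n,p}(x)·u^p·z^n converges and equals u/(1−u) + (u/(1−uz) − u/(1−u))·((1−uz)/(1−(1−x)uz))^{1−1/u}, where the power denotes the real power of the positive base (1−uz)/(1−(1−x)uz). -/
open MeasureTheory intervalIntegral

/-- `Q n p x` : probability that a dart game with `p` remaining players, where the
probability of beating the best throw so far is `x`, ends after exactly `n` further throws. -/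
noncomputable def Q : ℕ → ℕ → ℝ → ℝ
  | 0, p, _ => if p = 1 then 1 else 0
  | n + 1, p, x =>
      if p ≤ 1 then 0
      else (1 - x) * Q n (p - 1) x + ∫ v in (0:ℝ)..x, Q n p v

/-!
With `H n x = ∑ₚ Q n p x uᵖ`, summing the recursion over `p` shows that the partial sums
`S N` of `∑ₙ H n x zⁿ` satisfy `S (N + 2) = T (S (N + 1))` for the affine Volterra operator
`T g x = u - zux + (1 - x)uz g x + z ∫₀ˣ g`. The linear part of `T` has norm at most `z` on
bounded functions on `[0, 1]`, and the closed form is a fixed point of `T` (`z` times its power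
factor has the explicit primitive `(1 - uz)^(1 - 1/u) (1 - (1 - v)uz)^(1/u)`), so `S (N + 1)`
converges to it at rate `O(zᴺ)`. Since `0 ≤ Q ≤ 1`, the double series is dominated by
`∑ u^(p+1) zⁿ`.
-/

open Finset Filter Topology

theorem Q_succ_one (n : ℕ) (x : ℝ) : Q (n + 1) 1 x = 0 := rfl

theorem Q_succ_add_two (n p : ℕ) (x : ℝ) :
    Q (n + 1) (p + 2) x = (1 - x) * Q n (p + 1) x + ∫ v in (0:ℝ)..x, Q n (p + 2) v := by
  simp [Q]

theorem continuous_Q (n p : ℕ) : Continuous (Q n p) := by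
  induction n generalizing p with
  | zero => exact continuous_const
  | succ n ih =>
    simp only [Q]
    split_ifs
    · exact continuous_const
    · exact ((continuous_const.sub continuous_id).mul (ih _)).add
        (continuous_primitive (fun a b => (ih p).intervalIntegrable a b) 0)

theorem Q_mem_Icc (n p : ℕ) {x : ℝ} (hx : x ∈ Set.Icc (0:ℝ) 1) :
    Q n p x ∈ Set.Icc (0:ℝ) 1 := by
  induction n generalizing p x with
  | zero => unfold Q; split_ifs <;> simp
  | succ n ih =>
    unfold Q
    split_ifs
    · simp
    have hsub : ∀ v ∈ Set.Icc 0 x, v ∈ Set.Icc (0:ℝ) 1 := fun v hv =>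
      ⟨hv.1, hv.2.trans hx.2⟩
    have hint : ∫ v in (0:ℝ)..x, Q n p v ∈ Set.Icc 0 x := by
      refine ⟨integral_nonneg hx.1 fun v hv => (ih p (hsub v hv)).1, ?_⟩
      simpa using integral_mono_on hx.1 ((continuous_Q n p).intervalIntegrable 0 x)
        (intervalIntegrable_const (μ := volume)) fun v hv => (ih p (hsub v hv)).2
    obtain ⟨h0, h1⟩ := ih (p - 1) hx
    constructor <;> nlinarith [hx.1, hx.2, hint.1, hint.2]

theorem Q_eq_zero_of_lt {n p : ℕ} (h : n + 1 < p) (x : ℝ) : Q n p x = 0 := by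
  induction n generalizing p x with
  | zero => simp [Q]; omega
  | succ n ih =>
    unfold Q
    simp [ih (by omega : n + 1 < p - 1), ih (by omega : n + 1 < p)]

/-- `Q n p` vanishes for `p > n + 1`, so the row is a finite sum. -/
noncomputable def rowGenFun (u : ℝ) (n : ℕ) (x : ℝ) : ℝ :=
  ∑ p ∈ range (n + 1), Q n (p + 1) x * u ^ (p + 1)

theorem continuous_rowGenFun (u : ℝ) (n : ℕ) : Continuous (rowGenFun u n) :=
  continuous_finsetSum _ fun p _ => (continuous_Q n (p + 1)).mul continuous_const

theorem rowGenFun_zero (u x : ℝ) : rowGenFun u 0 x = u := by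
  simp [rowGenFun, Q]

theorem sum_Q_add_two_mul_pow (u : ℝ) (n : ℕ) (x : ℝ) :
    ∑ p ∈ range (n + 1), Q n (p + 2) x * u ^ (p + 2) = rowGenFun u n x - Q n 1 x * u := by
  rw [rowGenFun, sum_range_succ' (fun p => Q n (p + 1) x * u ^ (p + 1)),
    sum_range_succ (fun p => Q n (p + 2) x * u ^ (p + 2)), Q_eq_zero_of_lt (by omega) x]
  simp

theorem rowGenFun_succ (u : ℝ) (n : ℕ) (x : ℝ) :
    rowGenFun u (n + 1) x = (1 - x) * u * rowGenFun u n x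
      + ∫ v in (0:ℝ)..x, (rowGenFun u n v - Q n 1 v * u) := by
  have hint : ∀ p ∈ range (n + 1), IntervalIntegrable (fun v => Q n (p + 2) v * u ^ (p + 2))
      volume 0 x := fun p _ => ((continuous_Q n _).mul continuous_const).intervalIntegrable 0 x
  calc rowGenFun u (n + 1) x
      = ∑ p ∈ range (n + 1), ((1 - x) * u * (Q n (p + 1) x * u ^ (p + 1))
          + ∫ v in (0:ℝ)..x, Q n (p + 2) v * u ^ (p + 2)) := by
        rw [rowGenFun, sum_range_succ']
        simp only [zero_add, Q_succ_one, zero_mul, add_zero, intervalIntegral.integral_mul_const]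
        refine sum_congr rfl fun p _ => ?_
        rw [Q_succ_add_two]
        ring
    _ = (1 - x) * u * rowGenFun u n x
          + ∫ v in (0:ℝ)..x, ∑ p ∈ range (n + 1), Q n (p + 2) v * u ^ (p + 2) := by
        rw [sum_add_distrib, integral_finsetSum hint, rowGenFun, mul_sum]
    _ = _ := by simp_rw [sum_Q_add_two_mul_pow]

noncomputable def partialGenFun (u z : ℝ) (N : ℕ) (x : ℝ) : ℝ :=
  ∑ n ∈ range N, rowGenFun u n x * z ^ n

theorem continuous_partialGenFun (u z : ℝ) (N : ℕ) : Continuous (partialGenFun u z N) :=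
  continuous_finsetSum _ fun n _ => (continuous_rowGenFun u n).mul continuous_const

theorem sum_Q_one_mul_pow (z : ℝ) (N : ℕ) (x : ℝ) :
    ∑ n ∈ range (N + 1), Q n 1 x * z ^ n = 1 := by
  simp [sum_range_succ', Q]

theorem partialGenFun_add_two (u z : ℝ) (N : ℕ) (x : ℝ) :
    partialGenFun u z (N + 2) x
      = u - z * u * x + (1 - x) * u * z * partialGenFun u z (N + 1) x
        + z * ∫ v in (0:ℝ)..x, partialGenFun u z (N + 1) v := by
  have hint : ∀ n ∈ range (N + 1), IntervalIntegrable
      (fun v => (rowGenFun u n v - Q n 1 v * u) * z ^ n) volume 0 x := fun n _ =>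
    (((continuous_rowGenFun u n).sub ((continuous_Q n 1).mul continuous_const)).mul
      continuous_const).intervalIntegrable 0 x
  calc partialGenFun u z (N + 2) x
      = u + z * ∑ n ∈ range (N + 1), ((1 - x) * u * (rowGenFun u n x * z ^ n)
          + ∫ v in (0:ℝ)..x, (rowGenFun u n v - Q n 1 v * u) * z ^ n) := by
        rw [partialGenFun, sum_range_succ', rowGenFun_zero, mul_sum]
        simp only [rowGenFun_succ, intervalIntegral.integral_mul_const, pow_zero, mul_one]
        rw [add_comm]
        congr 1
        exact sum_congr rfl fun n _ => by ring
    _ = u + z * ((1 - x) * u * partialGenFun u z (N + 1) x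
          + ∫ v in (0:ℝ)..x, (partialGenFun u z (N + 1) v - u)) := by
        rw [sum_add_distrib, ← integral_finsetSum hint, partialGenFun, mul_sum]
        congr 3
        refine intervalIntegral.integral_congr fun v _ => ?_
        simp only [sub_mul, sum_sub_distrib, partialGenFun, mul_right_comm _ u, ← sum_mul,
          sum_Q_one_mul_pow, one_mul]
    _ = _ := by
        rw [integral_sub ((continuous_partialGenFun u z _).intervalIntegrable 0 x)
          intervalIntegrable_const, intervalIntegral.integral_const, smul_eq_mul]
        ring

theorem rpow_one_sub_mul_rpow {a b : ℝ} (ha : 0 ≤ a) (hb : 0 < b) (s : ℝ) :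
    a ^ (1 - s) * b ^ s = b * (a / b) ^ (1 - s) := by
  rw [Real.div_rpow ha hb.le, mul_div_assoc', eq_div_iff (Real.rpow_pos_of_pos hb _).ne',
    mul_assoc, ← Real.rpow_add hb, add_sub_cancel, Real.rpow_one, mul_comm]

noncomputable def powerFactor (u z x : ℝ) : ℝ :=
  ((1 - u * z) / (1 - (1 - x) * u * z)) ^ (1 - 1 / u : ℝ)

noncomputable def closedGenFun (u z x : ℝ) : ℝ :=
  u / (1 - u) + (u / (1 - u * z) - u / (1 - u)) * powerFactor u z x

section ClosedForm

variable {u z : ℝ} (huz₀ : 0 ≤ u * z) (huz₁ : u * z < 1)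
include huz₀ huz₁

theorem one_sub_mul_mul_pos {v : ℝ} (hv : 0 ≤ v) : 0 < 1 - (1 - v) * u * z := by
  nlinarith [mul_nonneg hv huz₀]

theorem continuousOn_powerFactor : ContinuousOn (powerFactor u z) (Set.Ici 0) := by
  refine ContinuousOn.rpow_const ?_ fun v hv => Or.inl ?_
  · exact continuousOn_const.div (by fun_prop) fun v hv =>
      (one_sub_mul_mul_pos huz₀ huz₁ hv).ne'
  · exact (div_pos (by linarith) (one_sub_mul_mul_pos huz₀ huz₁ hv)).ne'

theorem continuousOn_closedGenFun : ContinuousOn (closedGenFun u z) (Set.Ici 0) :=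
  continuousOn_const.add (continuousOn_const.mul (continuousOn_powerFactor huz₀ huz₁))

omit huz₀ in
theorem hasDerivAt_powerFactor_primitive (hu : u ≠ 0) {v : ℝ} (hv : 0 < 1 - (1 - v) * u * z) :
    HasDerivAt (fun w => (1 - u * z) ^ (1 - 1 / u : ℝ) * (1 - (1 - w) * u * z) ^ (1 / u : ℝ))
      (z * powerFactor u z v) v := by
  have hD : HasDerivAt (fun w : ℝ => 1 - (1 - w) * u * z) (u * z) v := by
    simpa using (((hasDerivAt_id v).const_sub 1).mul_const u |>.mul_const z).const_sub 1
  refine ((hD.rpow_const (Or.inl hv.ne')).const_mul _).congr_deriv ?_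
  rw [powerFactor, Real.div_rpow (by linarith) hv.le,
    show (1 / u : ℝ) - 1 = -(1 - 1 / u) by ring, Real.rpow_neg hv.le]
  field_simp

theorem mul_integral_powerFactor (hu : u ≠ 0) {x : ℝ} (hx : 0 ≤ x) :
    z * ∫ v in (0:ℝ)..x, powerFactor u z v
      = (1 - (1 - x) * u * z) * powerFactor u z x - (1 - u * z) := by
  have hsub : Set.uIcc 0 x ⊆ Set.Ici (0:ℝ) := by
    rw [Set.uIcc_of_le hx]; exact Set.Icc_subset_Ici_self
  rw [← intervalIntegral.integral_const_mul, integral_eq_sub_of_hasDerivAt (fun v hv =>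
      hasDerivAt_powerFactor_primitive huz₁ hu (one_sub_mul_mul_pos huz₀ huz₁ (hsub hv).out))
    (((continuousOn_powerFactor huz₀ huz₁).mono hsub).const_smul z).intervalIntegrable,
    rpow_one_sub_mul_rpow (by linarith) (one_sub_mul_mul_pos huz₀ huz₁ hx), sub_zero, one_mul,
    ← Real.rpow_add (by linarith), sub_add_cancel, Real.rpow_one, powerFactor]

theorem closedGenFun_eq (hu : u ≠ 0) (hu₁ : u ≠ 1) {x : ℝ} (hx : 0 ≤ x) :
    closedGenFun u z x = u - z * u * x + (1 - x) * u * z * closedGenFun u z x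
      + z * ∫ v in (0:ℝ)..x, closedGenFun u z v := by
  have hsub : Set.uIcc 0 x ⊆ Set.Ici (0:ℝ) := by
    rw [Set.uIcc_of_le hx]; exact Set.Icc_subset_Ici_self
  have hP := mul_integral_powerFactor huz₀ huz₁ hu hx
  simp only [closedGenFun]
  set A := u / (1 - u)
  set B := u / (1 - u * z) - A
  have hA : A * (1 - u) = u := div_mul_cancel₀ _ (sub_ne_zero.2 hu₁.symm)
  have hB : B * (1 - u * z) = u - A * (1 - u * z) := by
    rw [sub_mul, div_mul_cancel₀ _ (by linarith)]
  rw [intervalIntegral.integral_add intervalIntegrable_const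
    ((((continuousOn_powerFactor huz₀ huz₁).mono hsub).intervalIntegrable).const_mul B),
    intervalIntegral.integral_const, intervalIntegral.integral_const_mul, smul_eq_mul, sub_zero]
  linear_combination -B * hP + hB - z * x * hA

end ClosedForm

theorem abs_mul_add_integral_le {g : ℝ → ℝ} {a z x K : ℝ} (ha₀ : 0 ≤ a) (ha₁ : a ≤ 1)
    (hz : 0 ≤ z) (hx : x ∈ Set.Icc (0:ℝ) 1) (hg : ∀ v ∈ Set.Icc 0 x, |g v| ≤ K) :
    |(1 - x) * a * z * g x + z * ∫ v in (0:ℝ)..x, g v| ≤ z * K := by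
  have hgx : |g x| ≤ K := hg x ⟨hx.1, le_rfl⟩
  have hI : |∫ v in (0:ℝ)..x, g v| ≤ K * x := by
    have := norm_integral_le_of_norm_le_const (a := 0) (b := x) (f := g) fun v hv =>
      (Real.norm_eq_abs _).trans_le (hg v (Set.Ioc_subset_Icc_self (Set.uIoc_of_le hx.1 ▸ hv)))
    rwa [Real.norm_eq_abs, sub_zero, abs_of_nonneg hx.1] at this
  have hax : 0 ≤ (1 - x) * a * z := mul_nonneg (mul_nonneg (by linarith [hx.2]) ha₀) hz
  calc |(1 - x) * a * z * g x + z * ∫ v in (0:ℝ)..x, g v|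
      ≤ (1 - x) * a * z * |g x| + z * |∫ v in (0:ℝ)..x, g v| := by
        refine (abs_add_le _ _).trans_eq ?_
        rw [abs_mul _ (g x), abs_mul z, abs_of_nonneg hax, abs_of_nonneg hz]
    _ ≤ (1 - x) * a * z * K + z * (K * x) := by gcongr
    _ ≤ z * K := by
        have hK : 0 ≤ K := (abs_nonneg _).trans hgx
        nlinarith [mul_nonneg (mul_nonneg (mul_nonneg hz hK) (sub_nonneg.2 hx.2))
          (sub_nonneg.2 ha₁)]

section Convergence

variable {u z : ℝ} (hu : u ∈ Set.Ioo (0:ℝ) 1) (hz : z ∈ Set.Ico (0:ℝ) 1)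
include hu hz

theorem mul_mem_Ico_of_mem_Ioo_of_mem_Ico : u * z ∈ Set.Ico (0:ℝ) 1 :=
  ⟨mul_nonneg hu.1.le hz.1, by nlinarith [hu.2, hz.1, hz.2]⟩

theorem abs_partialGenFun_sub_closedGenFun_le {C : ℝ}
    (hC : ∀ v ∈ Set.Icc (0:ℝ) 1, |u - closedGenFun u z v| ≤ C) (N : ℕ) :
    ∀ x ∈ Set.Icc (0:ℝ) 1, |partialGenFun u z (N + 1) x - closedGenFun u z x| ≤ z ^ N * C := by
  obtain ⟨huz₀, huz₁⟩ := mul_mem_Ico_of_mem_Ioo_of_mem_Ico hu hz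
  induction N with
  | zero => simpa [partialGenFun, rowGenFun_zero] using hC
  | succ N ih =>
    intro x hx
    have hsub : Set.uIcc 0 x ⊆ Set.Ici (0:ℝ) := by
      rw [Set.uIcc_of_le hx.1]; exact Set.Icc_subset_Ici_self
    have hrec : partialGenFun u z (N + 2) x - closedGenFun u z x
        = (1 - x) * u * z * (partialGenFun u z (N + 1) x - closedGenFun u z x)
          + z * ∫ v in (0:ℝ)..x, (partialGenFun u z (N + 1) v - closedGenFun u z v) := by
      rw [integral_sub ((continuous_partialGenFun u z _).intervalIntegrable 0 x)
        ((continuousOn_closedGenFun huz₀ huz₁).mono hsub).intervalIntegrable]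
      linear_combination
        partialGenFun_add_two u z N x - closedGenFun_eq huz₀ huz₁ hu.1.ne' hu.2.ne hx.1
    rw [hrec, pow_succ', mul_assoc z]
    exact abs_mul_add_integral_le hu.1.le hu.2.le hz.1 hx
      fun v hv => ih v ⟨hv.1, hv.2.trans hx.2⟩

theorem tendsto_partialGenFun {x : ℝ} (hx : x ∈ Set.Icc (0:ℝ) 1) :
    Tendsto (fun N => partialGenFun u z N x) atTop (𝓝 (closedGenFun u z x)) := by
  have huz := mul_mem_Ico_of_mem_Ioo_of_mem_Ico hu hz
  obtain ⟨C, hC⟩ := isCompact_Icc.exists_bound_of_continuousOn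
    (continuousOn_const.sub ((continuousOn_closedGenFun huz.1 huz.2).mono Set.Icc_subset_Ici_self))
  have hpow : Tendsto (fun N : ℕ => z ^ N * C) atTop (𝓝 0) := by
    simpa using (tendsto_pow_atTop_nhds_zero_of_lt_one hz.1 hz.2).mul_const C
  refine (tendsto_add_atTop_iff_nat 1).mp ?_
  simpa using (squeeze_zero_norm (fun N => abs_partialGenFun_sub_closedGenFun_le hu hz hC N x hx)
    hpow).add_const (closedGenFun u z x)

end Convergence

theorem summable_Q_mul_pow_mul_pow {x u z : ℝ} (hx : x ∈ Set.Icc (0:ℝ) 1)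
    (hu : u ∈ Set.Ioo (0:ℝ) 1) (hz : z ∈ Set.Ico (0:ℝ) 1) :
    Summable fun q : ℕ × ℕ => Q q.2 (q.1 + 1) x * u ^ (q.1 + 1) * z ^ q.2 := by
  have hu₀ := hu.1
  have hz₀ := hz.1
  have hgeom : Summable fun q : ℕ × ℕ => u ^ (q.1 + 1) * z ^ q.2 :=
    ((summable_nat_add_iff 1).2 (summable_geometric_of_lt_one hu₀.le hu.2)).mul_of_nonneg
      (summable_geometric_of_lt_one hz₀ hz.2) (fun _ => pow_nonneg hu₀.le _)
      fun _ => pow_nonneg hz₀ _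
  refine hgeom.of_nonneg_of_le (fun q => ?_) fun q => ?_
  · have := (Q_mem_Icc q.2 (q.1 + 1) hx).1
    positivity
  · rw [mul_assoc]
    exact mul_le_of_le_one_left (by positivity) (Q_mem_Icc q.2 (q.1 + 1) hx).2

theorem hasSum_rowGenFun_mul_pow {x u z a : ℝ}
    (h : HasSum (fun q : ℕ × ℕ => Q q.2 (q.1 + 1) x * u ^ (q.1 + 1) * z ^ q.2) a) :
    HasSum (fun n => rowGenFun u n x * z ^ n) a := by
  refine ((Equiv.prodComm ℕ ℕ).hasSum_iff.2 h).prod_fiberwise fun n => ?_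
  rw [rowGenFun, sum_mul]
  exact hasSum_sum_of_ne_finset_zero fun p hp => by
    simp [Q_eq_zero_of_lt (by simpa using hp : n + 1 < p + 1)]

/-- For `x ∈ [0,1]`, `u ∈ (0,1)` and `z ∈ [0,1)`, the double series
`∑_{p≥1} ∑_{n≥0} Q_{n,p}(x) u^p z^n` converges, with sum
`u/(1−u) + (u/(1−uz) − u/(1−u))·((1−uz)/(1−(1−x)uz))^{1−1/u}`, where the power is the
real power of the positive base `(1−uz)/(1−(1−x)uz)`. -/
theorem Q_genFun_x (x u z : ℝ) (hx : x ∈ Set.Icc (0:ℝ) 1) (hu : u ∈ Set.Ioo (0:ℝ) 1)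
    (hz : z ∈ Set.Ico (0:ℝ) 1) :
    HasSum (fun q : ℕ × ℕ => Q q.2 (q.1 + 1) x * u ^ (q.1 + 1) * z ^ q.2)
      (u / (1 - u) + (u / (1 - u * z) - u / (1 - u)) *
        ((1 - u * z) / (1 - (1 - x) * u * z)) ^ (1 - 1 / u : ℝ)) := by
  have hsum := (summable_Q_mul_pow_mul_pow hx hu hz).hasSum
  have hrows := (hasSum_rowGenFun_mul_pow hsum).tendsto_sum_nat
  rwa [tendsto_nhds_unique hrows (tendsto_partialGenFun hu hz hx)] at hsum
end

section
/- For every integer p ≥ 2 and all x ∈ [0,1]: P_{p,1}(x) = ∫_0^x P_{p,p}(v) dv, and for every 2 ≤ k ≤ p, P_{p,k}(x) = (1−x)·P_{p−1,k−1}(x) + ∫_0^x P_{p,k−1}(v) dv, where P_{1,1}(x) = 1 for all x ∈ [0,1]. -/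
open MeasureTheory intervalIntegral

/-! Each defining recursion of `R` holds term by term, so summing over `n` gives the
recurrence for `P` as soon as the sums may be interchanged with the integrals `∫₀ˣ`. This is
dominated convergence: on `[0, 1]`, `|R n p k x| ≤ 2 ^ n x ^ (n + 1 - p) / (n + 1 - p)!`, which
is summable in `n`. -/

/-- `R n p k x` : probability that, in a dart game with `p` remaining players where the
probability of beating the best throw so far is `x`, the `k`-th player in throwing order
wins after exactly `n` further throws. -/
noncomputable def R : ℕ → ℕ → ℕ → ℝ → ℝ
  | 0, p, k, _ => if p = 1 ∧ k = 1 then 1 else 0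
  | n + 1, p, k, x =>
      if p ≤ 1 then 0
      else if k = 1 then ∫ v in (0:ℝ)..x, R n p p v
      else (1 - x) * R n (p - 1) (k - 1) x + ∫ v in (0:ℝ)..x, R n p (k - 1) v

/-- `P p k x = ∑_{n≥0} R_{n,p,k}(x)` : the probability that, when `p` players remain and
the probability of beating the best throw so far is `x`, the `k`-th player in throwing
order wins the game. -/
noncomputable def P (p k : ℕ) (x : ℝ) : ℝ := ∑' n : ℕ, R n p k x

theorem intervalIntegral.hasSum_integral_of_norm_le {ι E : Type*} [Countable ι]
    [NormedAddCommGroup E] [NormedSpace ℝ E] [CompleteSpace E] {F : ι → ℝ → E} {M : ι → ℝ}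
    {a b : ℝ} (hF : ∀ i, Continuous (F i)) (hM : Summable M)
    (hFM : ∀ i, ∀ t ∈ Set.uIoc a b, ‖F i t‖ ≤ M i) :
    HasSum (fun i => ∫ t in a..b, F i t) (∫ t in a..b, ∑' i, F i t) := by
  refine hasSum_integral_of_dominated_convergence (fun i _ => M i)
    (fun i => (hF i).aestronglyMeasurable) (fun i => .of_forall (hFM i))
    (.of_forall fun _ _ => hM) intervalIntegrable_const (.of_forall fun t ht => ?_)
  exact (hM.of_norm_bounded (fun i => hFM i t ht)).hasSum

theorem pow_div_factorial_le_pow_div_factorial {x : ℝ} (hx : x ∈ Set.Icc (0:ℝ) 1) {a b : ℕ}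
    (hab : a ≤ b) : x ^ b / b.factorial ≤ x ^ a / a.factorial :=
  div_le_div₀ (pow_nonneg hx.1 a) (pow_le_pow_of_le_one hx.1 hx.2 hab)
    (mod_cast a.factorial_pos) (mod_cast Nat.factorial_le hab)

theorem integral_pow_div_factorial (m : ℕ) (x : ℝ) :
    ∫ v in (0:ℝ)..x, v ^ m / m.factorial = x ^ (m + 1) / (m + 1).factorial := by
  rw [intervalIntegral.integral_div, integral_pow, Nat.factorial_succ]
  field_simp
  push_cast
  ring

theorem abs_integral_le_of_abs_le_pow_div_factorial {f : ℝ → ℝ} {C x : ℝ} {m : ℕ}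
    (hx : 0 ≤ x) (hf : ∀ v ∈ Set.Ioc 0 x, |f v| ≤ C * (v ^ m / m.factorial)) :
    |∫ v in (0:ℝ)..x, f v| ≤ C * (x ^ (m + 1) / (m + 1).factorial) := by
  rw [← integral_pow_div_factorial, ← intervalIntegral.integral_const_mul, ← Real.norm_eq_abs]
  refine norm_integral_le_of_norm_le hx (.of_forall hf) (Continuous.intervalIntegrable ?_ _ _)
  fun_prop

theorem R_succ (n p k : ℕ) (x : ℝ) :
    R (n + 1) p k x = if p ≤ 1 then 0
      else if k = 1 then ∫ v in (0:ℝ)..x, R n p p v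
      else (1 - x) * R n (p - 1) (k - 1) x + ∫ v in (0:ℝ)..x, R n p (k - 1) v := rfl

theorem continuous_R (n p k : ℕ) : Continuous (R n p k) := by
  induction n generalizing p k with
  | zero => exact continuous_const
  | succ n ih =>
    have hprim : ∀ j, Continuous fun x => ∫ v in (0:ℝ)..x, R n p j v := fun j =>
      continuous_primitive (fun _ _ => (ih p j).intervalIntegrable _ _) 0
    simp only [funext (R_succ n p k)]
    split_ifs
    · exact continuous_const
    · exact hprim p
    · exact ((continuous_const.sub continuous_id).mul (ih _ _)).add (hprim _)

/-- Of the `n` steps of the recursion, at most `p - 1` are non-integrating `(1 - x)` steps,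
since `R 0 p k` vanishes unless `p = 1`; each other step integrates once, whence the power
`x ^ (n + 1 - p)`. -/
theorem abs_R_le (n p k : ℕ) {x : ℝ} (hx : x ∈ Set.Icc (0:ℝ) 1) :
    |R n p k x| ≤ 2 ^ n * (x ^ (n + 1 - p) / (n + 1 - p).factorial) := by
  induction n generalizing p k x with
  | zero =>
    rcases hx with ⟨hx0, -⟩
    by_cases h : p = 1 ∧ k = 1
    · simp [R, h]
    · simp only [R, if_neg h, abs_zero]
      positivity
  | succ n ih =>
    have hint : ∀ j, |∫ v in (0:ℝ)..x, R n p j v|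
        ≤ 2 ^ n * (x ^ (n + 2 - p) / (n + 2 - p).factorial) := fun j =>
      (abs_integral_le_of_abs_le_pow_div_factorial hx.1
        fun v hv => ih p j ⟨hv.1.le, hv.2.trans hx.2⟩).trans
        (mul_le_mul_of_nonneg_left (pow_div_factorial_le_pow_div_factorial hx (by omega))
          (by positivity))
    have hB : ∀ m, 0 ≤ x ^ m / m.factorial := fun m =>
      div_nonneg (pow_nonneg hx.1 _) (Nat.cast_nonneg _)
    rw [R_succ]
    split_ifs with hp hk
    · rw [abs_zero]
      exact mul_nonneg (by positivity) (hB _)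
    · exact (hint p).trans
        (mul_le_mul_of_nonneg_right (pow_le_pow_right₀ one_le_two n.le_succ) (hB _))
    · have hexp : n + 1 - (p - 1) = n + 2 - p := by omega
      have hfirst : |(1 - x) * R n (p - 1) (k - 1) x|
          ≤ 2 ^ n * (x ^ (n + 2 - p) / (n + 2 - p).factorial) := by
        rw [abs_mul, ← hexp, ← one_mul (2 ^ n * _)]
        exact mul_le_mul (abs_le.2 ⟨by linarith [hx.2], by linarith [hx.1]⟩)
          (ih _ _ hx) (abs_nonneg _) zero_le_one
      calc _ ≤ _ := abs_add_le _ _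
        _ ≤ _ := add_le_add hfirst (hint _)
        _ = _ := by ring

theorem summable_two_pow_div_factorial_sub (p : ℕ) :
    Summable fun n : ℕ => (2:ℝ) ^ n / (n + 1 - p).factorial := by
  rw [← summable_nat_add_iff p]
  refine ((Real.summable_pow_div_factorial 2).mul_left (2 ^ p)).of_nonneg_of_le
    (fun n => by positivity) fun n => ?_
  rw [show n + p + 1 - p = n + 1 by omega, pow_add, mul_comm, mul_div_assoc]
  gcongr
  omega

theorem abs_R_le_two_pow_div_factorial (n p k : ℕ) {x : ℝ} (hx : x ∈ Set.Icc (0:ℝ) 1) :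
    |R n p k x| ≤ 2 ^ n / (n + 1 - p).factorial :=
  (abs_R_le n p k hx).trans <| by
    rw [← mul_div_assoc]
    gcongr
    exact mul_le_of_le_one_right (by positivity) (pow_le_one₀ hx.1 hx.2)

theorem hasSum_R (p k : ℕ) {x : ℝ} (hx : x ∈ Set.Icc (0:ℝ) 1) :
    HasSum (fun n => R n p k x) (P p k x) :=
  ((summable_two_pow_div_factorial_sub p).of_norm_bounded
    fun n => abs_R_le_two_pow_div_factorial n p k hx).hasSum

theorem hasSum_integral_R (p k : ℕ) {x : ℝ} (hx : x ∈ Set.Icc (0:ℝ) 1) :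
    HasSum (fun n => ∫ v in (0:ℝ)..x, R n p k v) (∫ v in (0:ℝ)..x, P p k v) := by
  refine hasSum_integral_of_norm_le (continuous_R · p k)
    (summable_two_pow_div_factorial_sub p) fun n v hv => ?_
  rw [Set.uIoc_of_le hx.1] at hv
  exact abs_R_le_two_pow_div_factorial n p k ⟨hv.1.le, hv.2.trans hx.2⟩

theorem P_eq_tsum_R_succ {p : ℕ} (hp : 2 ≤ p) (k : ℕ) {x : ℝ} (hx : x ∈ Set.Icc (0:ℝ) 1) :
    P p k x = ∑' n, R (n + 1) p k x := by
  rw [P, (hasSum_R p k hx).summable.tsum_eq_zero_add, R, if_neg (by omega), zero_add]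

/-- For `p ≥ 2` and `x ∈ [0,1]`: `P_{p,1}(x) = ∫_0^x P_{p,p}(v) dv` and, for
`2 ≤ k ≤ p`, `P_{p,k}(x) = (1−x)·P_{p−1,k−1}(x) + ∫_0^x P_{p,k−1}(v) dv`. -/
theorem P_recurrence (p : ℕ) (hp : 2 ≤ p) (x : ℝ) (hx : x ∈ Set.Icc (0:ℝ) 1) :
    P p 1 x = ∫ v in (0:ℝ)..x, P p p v ∧
    ∀ k : ℕ, 2 ≤ k → k ≤ p →
      P p k x = (1 - x) * P (p - 1) (k - 1) x + ∫ v in (0:ℝ)..x, P p (k - 1) v := by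
  have hp1 : ¬ p ≤ 1 := by omega
  refine ⟨?_, fun k hk _ => ?_⟩
  · simp only [P_eq_tsum_R_succ hp 1 hx, R_succ, if_neg hp1, if_true]
    exact (hasSum_integral_R p p hx).tsum_eq
  · simp only [P_eq_tsum_R_succ hp k hx, R_succ, if_neg hp1, if_neg (show k ≠ 1 by omega)]
    exact (((hasSum_R _ _ hx).mul_left (1 - x)).add (hasSum_integral_R p (k - 1) hx)).tsum_eq
end
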